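/- arXiv:2010.07271 — 6 statements merged into one kernel-verified Lean document; each statement's English description precedes it below -/
import Mathlib

section
/- If A is an m×d real matrix with ‖A‖_op = 1, η ∈ [0,1], and m < d, then the operator norm of I - 2ηA*A is exactly 1. -/
open Matrix MeasureTheory ProbabilityTheory Filter
open scoped RealInnerProductSpace NNReal

/-- Operator norm of a matrix with respect to Euclidean norms. -/
noncomputable def opNorm {m d : ℕ} (A : Matrix (Fin m) (Fin d) ℝ) : ℝ :=
  ‖LinearMap.toContinuousLinearMap (Matrix.toEuclideanLin A)‖

/-- Matrix-vector multiplication as a map between Euclidean spaces. -/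
noncomputable def Mv {m d : ℕ} (A : Matrix (Fin m) (Fin d) ℝ)
    (x : EuclideanSpace ℝ (Fin d)) : EuclideanSpace ℝ (Fin m) :=
  Matrix.toEuclideanLin A x

/-- A vector is `s`-sparse if it has at most `s` nonzero entries. -/
def Sparse {d : ℕ} (s : ℕ) (x : EuclideanSpace ℝ (Fin d)) : Prop :=
  Set.ncard {i | x i ≠ 0} ≤ s

/-- Coordinate projection onto the index set `S`. -/
noncomputable def proj {d : ℕ} (S : Finset (Fin d)) (z : EuclideanSpace ℝ (Fin d)) :
    EuclideanSpace ℝ (Fin d) :=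
  WithLp.toLp 2 (fun i => if i ∈ S then z i else 0)

/-!
Write `T` for `A` viewed as an operator between Euclidean spaces, so that the matrix in question
is `1 - c • T† T` with `c = 2η ∈ [0, 2]`. Expanding the square,
`‖x - c T†T x‖² = ‖x‖² - 2c‖Tx‖² + c²‖T†Tx‖² ≤ ‖x‖² - c(2 - c)‖Tx‖² ≤ ‖x‖²`,
using `‖T†‖ = ‖T‖ ≤ 1`; so the norm is at most `1`. Since `m < d`, `T` has a nonzero kernel vector,
which `1 - c • T† T` fixes; so the norm is at least `1`.
-/

namespace ContinuousLinearMap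

theorem one_le_opNorm_of_apply_eq_self {𝕜 E : Type*} [NontriviallyNormedField 𝕜]
    [NormedAddCommGroup E] [NormedSpace 𝕜 E] (f : E →L[𝕜] E) {x : E} (hx : x ≠ 0)
    (hfx : f x = x) : 1 ≤ ‖f‖ :=
  le_of_mul_le_mul_right (by simpa [hfx] using f.le_opNorm x) (norm_pos_iff.2 hx)

variable {E F : Type*} [NormedAddCommGroup E] [InnerProductSpace ℝ E] [CompleteSpace E]
  [NormedAddCommGroup F] [InnerProductSpace ℝ F] [CompleteSpace F]

theorem norm_id_sub_smul_adjoint_comp_self_le_one (T : E →L[ℝ] F) (hT : ‖T‖ ≤ 1)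
    {c : ℝ} (hc₀ : 0 ≤ c) (hc₂ : c ≤ 2) : ‖1 - c • (adjoint T ∘L T)‖ ≤ 1 := by
  refine opNorm_le_bound _ zero_le_one fun x => ?_
  have hadj : ‖adjoint T (T x)‖ ≤ ‖T x‖ := by
    simpa using
      (adjoint T).le_of_opNorm_le ((LinearIsometryEquiv.norm_map adjoint T).trans_le hT) (T x)
  have hinner : ⟪x, adjoint T (T x)⟫ = ‖T x‖ ^ 2 := by
    rw [adjoint_inner_right, real_inner_self_eq_norm_sq]
  have key : ‖x - c • adjoint T (T x)‖ ^ 2 ≤ ‖x‖ ^ 2 :=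
    calc ‖x - c • adjoint T (T x)‖ ^ 2
        = ‖x‖ ^ 2 - 2 * c * ‖T x‖ ^ 2 + c ^ 2 * ‖adjoint T (T x)‖ ^ 2 := by
          rw [norm_sub_sq_real, real_inner_smul_right, hinner, norm_smul, Real.norm_of_nonneg hc₀]
          ring
      _ ≤ ‖x‖ ^ 2 - c * (2 - c) * ‖T x‖ ^ 2 := by
          nlinarith [pow_le_pow_left₀ (norm_nonneg _) hadj 2, sq_nonneg c]
      _ ≤ ‖x‖ ^ 2 := by
          nlinarith [mul_nonneg (mul_nonneg hc₀ (sub_nonneg.2 hc₂)) (sq_nonneg ‖T x‖)]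
  simpa using (sq_le_sq₀ (norm_nonneg _) (norm_nonneg _)).1 key

theorem norm_id_sub_smul_adjoint_comp_self_eq_one (T : E →L[ℝ] F) (hT : ‖T‖ ≤ 1)
    {x : E} (hx : x ≠ 0) (hTx : T x = 0) {c : ℝ} (hc₀ : 0 ≤ c) (hc₂ : c ≤ 2) :
    ‖1 - c • (adjoint T ∘L T)‖ = 1 := by
  refine (norm_id_sub_smul_adjoint_comp_self_le_one T hT hc₀ hc₂).antisymm
    (one_le_opNorm_of_apply_eq_self _ hx ?_)
  simp [hTx]

end ContinuousLinearMap

theorem Matrix.toEuclideanLin_one_sub_smul_transpose_mul_self {ι κ : Type*} [Fintype ι]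
    [DecidableEq ι] [Fintype κ] [DecidableEq κ] (A : Matrix ι κ ℝ) (c : ℝ) :
    LinearMap.toContinuousLinearMap (toEuclideanLin (1 - c • (Aᵀ * A))) =
      1 - c • (ContinuousLinearMap.adjoint
        (LinearMap.toContinuousLinearMap (toEuclideanLin A)) ∘L
          LinearMap.toContinuousLinearMap (toEuclideanLin A)) := by
  have hadj : LinearMap.toContinuousLinearMap (toEuclideanLin Aᵀ) =
      ContinuousLinearMap.adjoint (LinearMap.toContinuousLinearMap (toEuclideanLin A)) := by
    rw [← conjTranspose_eq_transpose_of_trivial, toEuclideanLin_conjTranspose_eq_adjoint]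
    rfl
  ext1 x
  simp [← hadj, toEuclideanLin]

theorem stmt1 {m d : ℕ} (hmd : m < d) (A : Matrix (Fin m) (Fin d) ℝ) (hA : opNorm A = 1)
    (η : ℝ) (hη0 : 0 ≤ η) (hη1 : η ≤ 1) :
    opNorm ((1 : Matrix (Fin d) (Fin d) ℝ) - (2 * η) • (Aᵀ * A)) = 1 := by
  rw [opNorm, Matrix.toEuclideanLin_one_sub_smul_transpose_mul_self]
  obtain ⟨x, hx, hx0⟩ := (Submodule.ne_bot_iff _).1 <|
    LinearMap.ker_ne_bot_of_finrank_lt (f := toEuclideanLin A) (by simpa using hmd)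
  exact ContinuousLinearMap.norm_id_sub_smul_adjoint_comp_self_eq_one _ hA.le hx0 hx
    (by linarith) (by linarith)
end

section
/- Let A be an m×d real matrix with ‖A‖_op = 1 and restricted isometry constant δ_s, i.e., (1-δ_s)‖x‖² ≤ ‖Ax‖² ≤ (1+δ_s)‖x‖² for all s-sparse x. Then for every s-sparse vector x ∈ ℝ^d, ‖(I - A*A)x‖₂ ≤ √δ_s · ‖x‖₂. -/
open Matrix MeasureTheory ProbabilityTheory Filter
open scoped RealInnerProductSpace NNReal

/-! Write `T` for the operator of `A`, so that `(1 - Aᵀ A) x = x - T† (T x)`. Expanding the square,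
`‖x - T† T x‖² = ‖x‖² - 2 ‖T x‖² + ‖T† T x‖² ≤ ‖x‖² - ‖T x‖²` because `‖T†‖ = ‖T‖ ≤ 1`, and the lower
RIP bound makes the right-hand side at most `δ ‖x‖²`. -/

theorem norm_sub_adjoint_apply_apply_sq_le {𝕜 E F : Type*} [RCLike 𝕜]
    [NormedAddCommGroup E] [InnerProductSpace 𝕜 E] [CompleteSpace E]
    [NormedAddCommGroup F] [InnerProductSpace 𝕜 F] [CompleteSpace F]
    (T : E →L[𝕜] F) (hT : ‖T‖ ≤ 1) (z : E) :
    ‖z - T.adjoint (T z)‖ ^ 2 ≤ ‖z‖ ^ 2 - ‖T z‖ ^ 2 := by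
  have hadjoint : ‖T.adjoint (T z)‖ ≤ ‖T z‖ :=
    (T.adjoint.le_of_opNorm_le (by rwa [LinearIsometryEquiv.norm_map]) (T z)).trans_eq
      (one_mul _)
  have hinner : RCLike.re (inner 𝕜 z (T.adjoint (T z))) = ‖T z‖ ^ 2 := by
    rw [ContinuousLinearMap.adjoint_inner_right, inner_self_eq_norm_sq]
  rw [@norm_sub_sq 𝕜, hinner]
  nlinarith [norm_nonneg (T.adjoint (T z)), norm_nonneg (T z)]

theorem Mv_one_sub_transpose_mul {m d : ℕ} (A : Matrix (Fin m) (Fin d) ℝ)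
    (x : EuclideanSpace ℝ (Fin d)) :
    Mv (1 - Aᵀ * A) x =
      x - (LinearMap.toContinuousLinearMap (toEuclideanLin A)).adjoint (Mv A x) := by
  rw [← LinearMap.adjoint_toContinuousLinearMap, ← toEuclideanLin_conjTranspose_eq_adjoint,
    conjTranspose_eq_transpose_of_trivial]
  simp [Mv, Matrix.toLpLin_apply, Matrix.mulVec_mulVec]

theorem stmt2_general {m d s : ℕ} (A : Matrix (Fin m) (Fin d) ℝ) (hA : opNorm A = 1)
    (δ : ℝ)
    (hRIP : ∀ x : EuclideanSpace ℝ (Fin d), Sparse s x →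
      (1 - δ) * ‖x‖ ^ 2 ≤ ‖Mv A x‖ ^ 2 ∧ ‖Mv A x‖ ^ 2 ≤ (1 + δ) * ‖x‖ ^ 2)
    (x : EuclideanSpace ℝ (Fin d)) (hx : Sparse s x) :
    ‖Mv ((1 : Matrix (Fin d) (Fin d) ℝ) - Aᵀ * A) x‖ ≤ Real.sqrt δ * ‖x‖ := by
  set T := LinearMap.toContinuousLinearMap (toEuclideanLin A)
  have hcontract : ‖x - T.adjoint (Mv A x)‖ ^ 2 ≤ ‖x‖ ^ 2 - ‖Mv A x‖ ^ 2 :=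
    norm_sub_adjoint_apply_apply_sq_le T hA.le x
  have hsq : ‖Mv (1 - Aᵀ * A) x‖ ^ 2 ≤ δ * ‖x‖ ^ 2 := by
    rw [Mv_one_sub_transpose_mul]
    linarith [(hRIP x hx).1]
  rw [← Real.sqrt_sq (norm_nonneg x), ← Real.sqrt_mul' δ (sq_nonneg _)]
  exact Real.le_sqrt_of_sq_le hsq

theorem stmt2 {m d s : ℕ} (A : Matrix (Fin m) (Fin d) ℝ) (hA : opNorm A = 1)
    (δ : ℝ) (hδ0 : 0 ≤ δ)
    (hRIP : ∀ x : EuclideanSpace ℝ (Fin d), Sparse s x →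
      (1 - δ) * ‖x‖ ^ 2 ≤ ‖Mv A x‖ ^ 2 ∧ ‖Mv A x‖ ^ 2 ≤ (1 + δ) * ‖x‖ ^ 2)
    (x : EuclideanSpace ℝ (Fin d)) (hx : Sparse s x) :
    ‖Mv ((1 : Matrix (Fin d) (Fin d) ℝ) - Aᵀ * A) x‖ ≤ Real.sqrt δ * ‖x‖ :=
  stmt2_general A hA δ hRIP x hx
end

section
/- Let z, x* ∈ ℝ^d with x* s-sparse, let A be an m×d matrix, let C(x) = ‖A(x* − x)‖₂², and let ℓ = z − η∇C(z) for some η > 0. If H(z) denotes the s-sparse coordinate projection of z that is closest in Euclidean norm to ℓ among all s-sparse coordinate projections of z, then ‖H(z) − x*‖₂ ≤ √(‖z − ℓ‖₂² + ‖ℓ − x*‖₂²) + ‖ℓ − x*‖₂. -/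
open Matrix MeasureTheory ProbabilityTheory Filter
open scoped RealInnerProductSpace NNReal

/-! Pick an `s`-set `S` containing the support of `x*`. Coordinatewise,
`‖P_S z - ℓ‖² ≤ ‖z - ℓ‖² + ‖ℓ - x*‖²`: on `S` the entry is `(z - ℓ)ᵢ`, off `S` it is
`-ℓᵢ = -(ℓ - x*)ᵢ`. Minimality of `H(z)` and the triangle inequality through `ℓ` finish. -/

theorem Sparse.exists_card_eq_of_le {d s : ℕ} {x : EuclideanSpace ℝ (Fin d)} (hx : Sparse s x)
    (hsd : s ≤ d) : ∃ S : Finset (Fin d), S.card = s ∧ ∀ i ∉ S, x i = 0 := by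
  have hsupp : (Finset.univ.filter fun i => x i ≠ 0).card ≤ s := by
    rw [← Set.ncard_coe_finset]
    simpa [Sparse] using hx
  obtain ⟨S, hsub, hS⟩ := Finset.exists_superset_card_eq hsupp (by simpa using hsd)
  exact ⟨S, hS, fun i hi => by_contra fun hxi => hi (hsub (by simpa using hxi))⟩

theorem norm_proj_sub_sq_le {d : ℕ} {S : Finset (Fin d)} {x : EuclideanSpace ℝ (Fin d)}
    (hx : ∀ i ∉ S, x i = 0) (z ℓ : EuclideanSpace ℝ (Fin d)) :
    ‖proj S z - ℓ‖ ^ 2 ≤ ‖z - ℓ‖ ^ 2 + ‖ℓ - x‖ ^ 2 := by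
  simp only [EuclideanSpace.real_norm_sq_eq, ← Finset.sum_add_distrib]
  refine Finset.sum_le_sum fun i _ => ?_
  by_cases hi : i ∈ S
  · simp only [proj, hi, if_true, PiLp.sub_apply]
    nlinarith [sq_nonneg (ℓ i - x i)]
  · simp only [proj, hi, if_false, PiLp.sub_apply, hx i hi]
    nlinarith [sq_nonneg (z i - ℓ i)]

theorem stmt6_general {d s : ℕ} (z xs : EuclideanSpace ℝ (Fin d)) (hxs : Sparse s xs)
    (ℓ : EuclideanSpace ℝ (Fin d))
    (Ω : Finset (Fin d)) (hΩ : Ω.card = s)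
    (Hz : EuclideanSpace ℝ (Fin d))
    (hmin : ∀ Ω' : Finset (Fin d), Ω'.card = s → ‖Hz - ℓ‖ ≤ ‖proj Ω' z - ℓ‖) :
    ‖Hz - xs‖ ≤ Real.sqrt (‖z - ℓ‖ ^ 2 + ‖ℓ - xs‖ ^ 2) + ‖ℓ - xs‖ := by
  have hsd : s ≤ d := by simpa [hΩ] using Ω.card_le_univ
  obtain ⟨S, hS, hxsS⟩ := hxs.exists_card_eq_of_le hsd
  have hHz : ‖Hz - ℓ‖ ≤ Real.sqrt (‖z - ℓ‖ ^ 2 + ‖ℓ - xs‖ ^ 2) :=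
    (hmin S hS).trans (Real.le_sqrt_of_sq_le (norm_proj_sub_sq_le hxsS z ℓ))
  calc ‖Hz - xs‖ ≤ ‖Hz - ℓ‖ + ‖ℓ - xs‖ := norm_sub_le_norm_sub_add_norm_sub _ _ _
    _ ≤ Real.sqrt (‖z - ℓ‖ ^ 2 + ‖ℓ - xs‖ ^ 2) + ‖ℓ - xs‖ := by gcongr

theorem stmt6 {m d s : ℕ} (z xs : EuclideanSpace ℝ (Fin d)) (hxs : Sparse s xs)
    (A : Matrix (Fin m) (Fin d) ℝ) (η : ℝ) (hη : 0 < η)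
    (ℓ : EuclideanSpace ℝ (Fin d))
    (hℓ : ℓ = z - η • ((2 : ℝ) • Mv Aᵀ (Mv A z - Mv A xs)))
    (Ω : Finset (Fin d)) (hΩ : Ω.card = s)
    (Hz : EuclideanSpace ℝ (Fin d)) (hHz : Hz = proj Ω z)
    (hmin : ∀ Ω' : Finset (Fin d), Ω'.card = s → ‖Hz - ℓ‖ ≤ ‖proj Ω' z - ℓ‖) :
    ‖Hz - xs‖ ≤ Real.sqrt (‖z - ℓ‖ ^ 2 + ‖ℓ - xs‖ ^ 2) + ‖ℓ - xs‖ :=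
  stmt6_general z xs hxs ℓ Ω hΩ Hz hmin
end

section
/- Let A be an m×d matrix with ‖A‖_op = 1, x* ∈ ℝ^d s-sparse, y = Ax*, and 0 ≤ η ≤ 1. Let a ∈ ℝ^d be arbitrary, C(x) = ‖y − Ax‖₂², ℓ_η = a − η∇C(a), and let x' be the s-sparse coordinate projection of a closest to ℓ_η. Then ‖x* − x'‖₂ ≤ (1 + √(1 + 4η²)) ‖x* − a‖₂. -/
open Matrix MeasureTheory ProbabilityTheory Filter
open scoped RealInnerProductSpace NNReal

/-!
Write `v = x* - a` and `T` for `A` as an operator, so that the gradient step is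
`ℓ - a = 2η T†T v`. Since `‖T‖ ≤ 1` and `2η ≤ 2`, the step `ℓ` is no farther from `x*` than `a`
is, and it moves `a` by at most `2η ‖v‖`. Projecting `a` onto an `s`-set `S` containing the
support of `x*` leaves `ℓ - a` on `S` and `ℓ - x*` off `S`, so `‖ℓ - P_S a‖² ≤ (4η² + 1) ‖v‖²`;
the chosen projection `x'` is at least as close to `ℓ`, and the triangle inequality through `ℓ`
concludes.
-/

open ContinuousLinearMap (adjoint adjoint_inner_right le_opNorm norm_adjoint_comp_self)

section GradientStep

variable {E F : Type*} [NormedAddCommGroup E] [InnerProductSpace ℝ E] [CompleteSpace E]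
  [NormedAddCommGroup F] [InnerProductSpace ℝ F] [CompleteSpace F] {T : E →L[ℝ] F}

lemma norm_smul_adjoint_apply_apply_le (hT : ‖T‖ ≤ 1) {c : ℝ} (hc : 0 ≤ c) (v : E) :
    ‖c • adjoint T (T v)‖ ≤ c * ‖v‖ := by
  have hTTv : ‖adjoint T (T v)‖ ≤ ‖v‖ := calc
    ‖(adjoint T ∘L T) v‖ ≤ ‖adjoint T ∘L T‖ * ‖v‖ := le_opNorm _ _
    _ ≤ 1 * ‖v‖ := by
      rw [norm_adjoint_comp_self]
      gcongr
      exact mul_le_one₀ hT (norm_nonneg _) hT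
    _ = ‖v‖ := one_mul _
  rw [norm_smul, Real.norm_of_nonneg hc]
  gcongr

/-- A gradient step for `‖T v‖²` with step size `c / 2 ∈ [0, 1]` does not increase `‖v‖`. -/
lemma norm_sub_smul_adjoint_apply_apply_le (hT : ‖T‖ ≤ 1) {c : ℝ} (hc0 : 0 ≤ c) (hc2 : c ≤ 2)
    (v : E) : ‖v - c • adjoint T (T v)‖ ≤ ‖v‖ := by
  have hadj : ‖adjoint T (T v)‖ ≤ ‖T v‖ := calc
    ‖adjoint T (T v)‖ ≤ ‖adjoint T‖ * ‖T v‖ := le_opNorm _ _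
    _ ≤ 1 * ‖T v‖ := by rw [LinearIsometryEquiv.norm_map]; gcongr
    _ = ‖T v‖ := one_mul _
  have hinner : ⟪v, adjoint T (T v)⟫ = ‖T v‖ ^ 2 := by
    rw [adjoint_inner_right, real_inner_self_eq_norm_sq]
  have hsq : ‖v - c • adjoint T (T v)‖ ^ 2 ≤ ‖v‖ ^ 2 := by
    rw [norm_sub_sq_real, inner_smul_right, hinner, norm_smul, Real.norm_of_nonneg hc0]
    nlinarith [pow_le_pow_left₀ (by positivity) (mul_le_mul_of_nonneg_left hadj hc0) 2,
      mul_nonneg (mul_nonneg hc0 (sub_nonneg.2 hc2)) (sq_nonneg ‖T v‖)]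
  exact pow_le_pow_iff_left₀ (norm_nonneg _) (norm_nonneg _) two_ne_zero |>.1 hsq

end GradientStep

lemma Mv_transpose_eq_adjoint {m d : ℕ} (A : Matrix (Fin m) (Fin d) ℝ)
    (u : EuclideanSpace ℝ (Fin m)) :
    Mv Aᵀ u = (LinearMap.toContinuousLinearMap (Matrix.toEuclideanLin A)).adjoint u := by
  rw [Mv, ← Matrix.conjTranspose_eq_transpose_of_trivial,
    Matrix.toEuclideanLin_conjTranspose_eq_adjoint, ← LinearMap.adjoint_toContinuousLinearMap]
  rfl

lemma Sparse.exists_card_eq {d s : ℕ} {x : EuclideanSpace ℝ (Fin d)} (hx : Sparse s x)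
    (hs : s ≤ d) : ∃ S : Finset (Fin d), S.card = s ∧ ∀ i ∉ S, x i = 0 := by
  classical
  obtain ⟨S, hsupp, -, hS⟩ := Finset.exists_subsuperset_card_eq (n := s)
    (Finset.subset_univ {i | x i ≠ 0}.toFinset)
    (by rwa [← Set.ncard_eq_toFinset_card']) (by simpa using hs)
  exact ⟨S, hS, fun i hi => by_contra fun hxi => hi (hsupp (by simpa using hxi))⟩

lemma norm_sub_proj_sq_le {d : ℕ} {S : Finset (Fin d)} {x : EuclideanSpace ℝ (Fin d)}
    (hx : ∀ i ∉ S, x i = 0) (a z : EuclideanSpace ℝ (Fin d)) :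
    ‖z - proj S a‖ ^ 2 ≤ ‖z - a‖ ^ 2 + ‖z - x‖ ^ 2 := by
  simp only [EuclideanSpace.real_norm_sq_eq, ← Finset.sum_add_distrib]
  refine Finset.sum_le_sum fun i _ => ?_
  simp only [proj, PiLp.sub_apply]
  by_cases hi : i ∈ S
  · simp only [hi, if_true]
    nlinarith [sq_nonneg (z i - x i)]
  · simp only [hi, if_false, hx i hi, sub_zero]
    nlinarith [sq_nonneg (z i - a i)]

theorem stmt7_general {m d s : ℕ} (A : Matrix (Fin m) (Fin d) ℝ) (hA : opNorm A = 1)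
    (xs : EuclideanSpace ℝ (Fin d)) (hxs : Sparse s xs)
    (y : EuclideanSpace ℝ (Fin m)) (hy : y = Mv A xs)
    (η : ℝ) (hη0 : 0 ≤ η) (hη1 : η ≤ 1)
    (a : EuclideanSpace ℝ (Fin d)) (ℓ : EuclideanSpace ℝ (Fin d))
    (hℓ : ℓ = a - η • ((-2 : ℝ) • Mv Aᵀ (y - Mv A a)))
    (Ω : Finset (Fin d)) (hΩ : Ω.card = s)
    (x' : EuclideanSpace ℝ (Fin d))
    (hmin : ∀ Ω' : Finset (Fin d), Ω'.card = s → ‖x' - ℓ‖ ≤ ‖proj Ω' a - ℓ‖) :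
    ‖xs - x'‖ ≤ (1 + Real.sqrt (1 + 4 * η ^ 2)) * ‖xs - a‖ := by
  set T := LinearMap.toContinuousLinearMap (Matrix.toEuclideanLin A)
  have hT : ‖T‖ ≤ 1 := hA.le
  set v := xs - a
  have hstep : ℓ - a = (2 * η) • adjoint T (T v) := by
    rw [hℓ, hy, Mv_transpose_eq_adjoint, Mv, Mv, ← map_sub, smul_smul]
    rw [sub_sub_cancel_left, ← neg_smul]
    congr 1
    ring
  obtain ⟨S, hS, hxsS⟩ := hxs.exists_card_eq (hΩ ▸ Finset.card_le_univ Ω |>.trans_eq (by simp))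
  have hℓxs : ‖ℓ - xs‖ ≤ ‖v‖ := by
    rw [show ℓ - xs = -(v - (2 * η) • adjoint T (T v)) by
      rw [← hstep, show v = xs - a from rfl]; abel, norm_neg]
    exact norm_sub_smul_adjoint_apply_apply_le hT (by positivity) (by linarith) v
  have hℓa : ‖ℓ - a‖ ≤ 2 * η * ‖v‖ :=
    hstep ▸ norm_smul_adjoint_apply_apply_le hT (by positivity) v
  have hℓx' : ‖ℓ - x'‖ ≤ √(1 + 4 * η ^ 2) * ‖v‖ := by
    rw [norm_sub_rev, ← Real.sqrt_sq (norm_nonneg v), ← Real.sqrt_mul (by positivity)]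
    refine (hmin S hS).trans (Real.le_sqrt_of_sq_le ?_)
    rw [norm_sub_rev]
    nlinarith [norm_sub_proj_sq_le hxsS a ℓ, mul_le_mul hℓa hℓa (norm_nonneg _) (by positivity),
      mul_le_mul hℓxs hℓxs (norm_nonneg _) (norm_nonneg _)]
  calc ‖xs - x'‖ ≤ ‖xs - ℓ‖ + ‖ℓ - x'‖ := norm_sub_le_norm_sub_add_norm_sub _ _ _
    _ ≤ ‖v‖ + √(1 + 4 * η ^ 2) * ‖v‖ := by rw [norm_sub_rev]; gcongr
    _ = (1 + √(1 + 4 * η ^ 2)) * ‖xs - a‖ := by ring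

theorem stmt7 {m d s : ℕ} (A : Matrix (Fin m) (Fin d) ℝ) (hA : opNorm A = 1)
    (xs : EuclideanSpace ℝ (Fin d)) (hxs : Sparse s xs)
    (y : EuclideanSpace ℝ (Fin m)) (hy : y = Mv A xs)
    (η : ℝ) (hη0 : 0 ≤ η) (hη1 : η ≤ 1)
    (a : EuclideanSpace ℝ (Fin d)) (ℓ : EuclideanSpace ℝ (Fin d))
    (hℓ : ℓ = a - η • ((-2 : ℝ) • Mv Aᵀ (y - Mv A a)))
    (Ω : Finset (Fin d)) (hΩ : Ω.card = s)
    (x' : EuclideanSpace ℝ (Fin d)) (hx' : x' = proj Ω a)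
    (hmin : ∀ Ω' : Finset (Fin d), Ω'.card = s → ‖x' - ℓ‖ ≤ ‖proj Ω' a - ℓ‖) :
    ‖xs - x'‖ ≤ (1 + Real.sqrt (1 + 4 * η ^ 2)) * ‖xs - a‖ :=
  stmt7_general A hA xs hxs y hy η hη0 hη1 a ℓ hℓ Ω hΩ x' hmin
end

section
/- Let A be an m×d matrix with ‖A‖_op = 1 and restricted isometry constant δ_{2s} < 1/(1+√(1+4η²))² for some η ∈ [0,1]. Let x* be s-sparse, y = Ax*, and define the ILAT iteration: a^t = x^{t-1} + A*(y − Ax^{t-1}), and x^t is the s-sparse coordinate projection of a^t closest to the look-ahead point a^t − η∇C(a^t), where C(x) = ‖y − Ax‖₂². Then ‖x^t − x*‖₂ ≤ ρ^t ‖x^0 − x*‖₂ with ρ = √δ_{2s}(1+√(1+4η²)) < 1; in particular x^t → x*. -/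
open Matrix MeasureTheory ProbabilityTheory Filter
open scoped RealInnerProductSpace NNReal

/-!
Write `T` for `A` as an operator, `e = x^{t-1} - x*` and `u = a^t - x* = (I - T*T) e`. The restricted
isometry property gives `‖u‖ ≤ √δ ‖e‖`. The look-ahead point is `x* + u - w` with `w = 2η T*T u`, and
since `‖T‖ ≤ 1` and `0 ≤ 2η ≤ 2` we have `‖u - w‖ ≤ ‖u‖` and `‖w‖ ≤ 2η ‖u‖`. Comparing `x^t` with the
projection of `a^t` onto an `s`-set containing the support of `x*` (each coordinate of that competitor
minus the look-ahead point is a coordinate of `w` or of `w - u`) yields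
`‖x^t - x*‖ ≤ (1 + √(1 + 4η²)) ‖u‖ ≤ ρ ‖e‖`.
-/

lemma le_sqrt_mul_of_sq_le {a b c : ℝ} (hb : 0 ≤ b) (h : a ^ 2 ≤ c * b ^ 2) : a ≤ √c * b :=
  calc a ≤ √(a ^ 2) := (le_abs_self a).trans_eq (Real.sqrt_sq_eq_abs a).symm
    _ ≤ √(c * b ^ 2) := Real.sqrt_le_sqrt h
    _ = √c * b := by rw [Real.sqrt_mul' _ (sq_nonneg b), Real.sqrt_sq hb]

section Adjoint

open ContinuousLinearMap

variable {E F : Type*} [NormedAddCommGroup E] [InnerProductSpace ℝ E] [CompleteSpace E]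
  [NormedAddCommGroup F] [InnerProductSpace ℝ F] [CompleteSpace F] {T : E →L[ℝ] F}

lemma norm_adjoint_apply_le (hT : ‖T‖ ≤ 1) (w : F) : ‖T.adjoint w‖ ≤ ‖w‖ :=
  T.adjoint.le_of_opNorm_le (by rwa [LinearIsometryEquiv.norm_map]) w |>.trans_eq (one_mul _)

lemma norm_sub_smul_adjoint_apply_sq_le (hT : ‖T‖ ≤ 1) (c : ℝ) (w : E) :
    ‖w - c • T.adjoint (T w)‖ ^ 2 ≤ ‖w‖ ^ 2 - (2 * c - c ^ 2) * ‖T w‖ ^ 2 := by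
  have hinner : ⟪w, T.adjoint (T w)⟫ = ‖T w‖ ^ 2 := by
    rw [adjoint_inner_right, real_inner_self_eq_norm_sq]
  have hle : ‖T.adjoint (T w)‖ ^ 2 ≤ ‖T w‖ ^ 2 := by
    gcongr
    exact norm_adjoint_apply_le hT _
  rw [norm_sub_sq_real, real_inner_smul_right, hinner, norm_smul, mul_pow, Real.norm_eq_abs, sq_abs]
  nlinarith [mul_le_mul_of_nonneg_left hle (sq_nonneg c)]

lemma norm_sub_smul_adjoint_apply_le (hT : ‖T‖ ≤ 1) {c : ℝ} (hc0 : 0 ≤ c) (hc2 : c ≤ 2) (w : E) :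
    ‖w - c • T.adjoint (T w)‖ ≤ ‖w‖ := by
  have hc : 0 ≤ 2 * c - c ^ 2 := by nlinarith
  refine le_of_pow_le_pow_left₀ two_ne_zero (norm_nonneg w) ?_
  nlinarith [norm_sub_smul_adjoint_apply_sq_le hT c w, mul_nonneg hc (sq_nonneg ‖T w‖)]

lemma norm_sub_adjoint_apply_le_sqrt (hT : ‖T‖ ≤ 1) {δ : ℝ} {v : E}
    (hv : (1 - δ) * ‖v‖ ^ 2 ≤ ‖T v‖ ^ 2) : ‖v - T.adjoint (T v)‖ ≤ √δ * ‖v‖ := by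
  have h := norm_sub_smul_adjoint_apply_sq_le hT 1 v
  rw [one_smul] at h
  exact le_sqrt_mul_of_sq_le (norm_nonneg v) (by linarith)

end Adjoint

lemma Mv_apply {m d : ℕ} (A : Matrix (Fin m) (Fin d) ℝ) (v : EuclideanSpace ℝ (Fin d)) :
    Mv A v = LinearMap.toContinuousLinearMap (Matrix.toEuclideanLin A) v :=
  rfl

lemma Mv_transpose_apply {m d : ℕ} (A : Matrix (Fin m) (Fin d) ℝ) (w : EuclideanSpace ℝ (Fin m)) :
    Mv Aᵀ w = (LinearMap.toContinuousLinearMap (Matrix.toEuclideanLin A)).adjoint w := by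
  rw [Mv, ← conjTranspose_eq_transpose_of_trivial, toEuclideanLin_conjTranspose_eq_adjoint]
  rfl

section Sparse

variable {d : ℕ}

lemma Sparse.sub {s r : ℕ} {u v : EuclideanSpace ℝ (Fin d)} (hu : Sparse s u) (hv : Sparse r v) :
    Sparse (s + r) (u - v) := by
  have hsub : {i | (u - v) i ≠ 0} ⊆ {i | u i ≠ 0} ∪ {i | v i ≠ 0} := by
    intro i hi
    by_contra h
    simp_all
  exact (Set.ncard_le_ncard hsub).trans ((Set.ncard_union_le _ _).trans (add_le_add hu hv))

lemma sparse_proj (S : Finset (Fin d)) (z : EuclideanSpace ℝ (Fin d)) :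
    Sparse S.card (proj S z) := by
  have hsub : {i | proj S z i ≠ 0} ⊆ (S : Set (Fin d)) := by
    intro i hi
    by_contra h
    simp_all [proj]
  exact (Set.ncard_le_ncard hsub).trans (Set.ncard_coe_finset S).le

lemma Sparse.exists_card_eq_forall_notMem_eq_zero {s : ℕ} {x : EuclideanSpace ℝ (Fin d)} (hx : Sparse s x)
    (hs : s ≤ d) : ∃ Ω : Finset (Fin d), Ω.card = s ∧ ∀ i ∉ Ω, x i = 0 := by
  classical
  have hsupp : (Finset.univ.filter fun i => x i ≠ 0).card ≤ s := by
    rwa [← Set.ncard_coe_finset, Finset.coe_filter_univ]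
  obtain ⟨Ω, hsuppΩ, -, hΩ⟩ :=
    Finset.exists_subsuperset_card_eq (Finset.subset_univ _) hsupp (by simpa using hs)
  exact ⟨Ω, hΩ, fun i hi => by_contra fun h => hi (hsuppΩ (by simpa using h))⟩

end Sparse

lemma norm_sq_le_add_of_forall_eq_or_eq {ι : Type*} [Fintype ι] {z p q : EuclideanSpace ℝ ι}
    (h : ∀ i, z i = p i ∨ z i = q i) : ‖z‖ ^ 2 ≤ ‖p‖ ^ 2 + ‖q‖ ^ 2 := by
  simp only [EuclideanSpace.norm_sq_eq, Real.norm_eq_abs, sq_abs, ← Finset.sum_add_distrib]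
  refine Finset.sum_le_sum fun i _ => ?_
  rcases h i with h | h <;> rw [h] <;> nlinarith [sq_nonneg (p i), sq_nonneg (q i)]

lemma norm_sub_le_of_lookahead {d : ℕ} {Ω : Finset (Fin d)} {xs u w x' : EuclideanSpace ℝ (Fin d)}
    {c : ℝ} (hxs : ∀ i ∉ Ω, xs i = 0) (hw : ‖w‖ ≤ c * ‖u‖) (huw : ‖u - w‖ ≤ ‖u‖)
    (hopt : ‖x' - (xs + u - w)‖ ≤ ‖proj Ω (xs + u) - (xs + u - w)‖) :
    ‖x' - xs‖ ≤ (1 + √(1 + c ^ 2)) * ‖u‖ := by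
  have hcoord : ∀ i, (proj Ω (xs + u) - (xs + u - w)) i = w i ∨
      (proj Ω (xs + u) - (xs + u - w)) i = (w - u) i := by
    intro i
    by_cases hi : i ∈ Ω
    · left; simp [proj, hi]
    · right; simp [proj, hi, hxs i hi]
  have hproj : ‖proj Ω (xs + u) - (xs + u - w)‖ ≤ √(1 + c ^ 2) * ‖u‖ := by
    refine le_sqrt_mul_of_sq_le (norm_nonneg u) ?_
    have := norm_sq_le_add_of_forall_eq_or_eq hcoord
    rw [norm_sub_rev w u] at this
    nlinarith [norm_nonneg w, norm_nonneg (u - w)]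
  calc ‖x' - xs‖ = ‖(x' - (xs + u - w)) + (u - w)‖ := by congr 1; abel
    _ ≤ ‖x' - (xs + u - w)‖ + ‖u - w‖ := norm_add_le _ _
    _ ≤ √(1 + c ^ 2) * ‖u‖ + ‖u‖ := add_le_add (hopt.trans hproj) huw
    _ = (1 + √(1 + c ^ 2)) * ‖u‖ := by ring

lemma ilat_step_error_le {d : ℕ} {F : Type*} [NormedAddCommGroup F] [InnerProductSpace ℝ F]
    [CompleteSpace F] {T : EuclideanSpace ℝ (Fin d) →L[ℝ] F} (hT : ‖T‖ ≤ 1) {η δ : ℝ}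
    (hη0 : 0 ≤ η) (hη1 : η ≤ 1) {Ω : Finset (Fin d)} {xs x a x' : EuclideanSpace ℝ (Fin d)}
    (hxs : ∀ i ∉ Ω, xs i = 0) (hRIP : (1 - δ) * ‖x - xs‖ ^ 2 ≤ ‖T (x - xs)‖ ^ 2)
    (ha : a = x + T.adjoint (T xs - T x))
    (hopt : ‖x' - (a - η • ((-2 : ℝ) • T.adjoint (T xs - T a)))‖ ≤
      ‖proj Ω a - (a - η • ((-2 : ℝ) • T.adjoint (T xs - T a)))‖) :
    ‖x' - xs‖ ≤ √δ * (1 + √(1 + 4 * η ^ 2)) * ‖x - xs‖ := by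
  set e := x - xs
  set u := e - T.adjoint (T e)
  set w := (2 * η) • T.adjoint (T u)
  have ha_eq : a = xs + u := by
    rw [ha, ← map_sub, ← neg_sub x xs, map_neg, map_neg]
    simp only [u, e]
    abel
  have hlookahead : a - η • ((-2 : ℝ) • T.adjoint (T xs - T a)) = xs + u - w := by
    rw [ha_eq, map_add, sub_add_cancel_left, map_neg]
    simp only [w]
    module
  rw [hlookahead, ha_eq] at hopt
  have hw : ‖w‖ ≤ 2 * η * ‖u‖ := by
    rw [norm_smul, Real.norm_of_nonneg (by positivity)]
    gcongr
    exact (norm_adjoint_apply_le hT _).trans (T.le_of_opNorm_le hT u |>.trans_eq (one_mul _))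
  have huw : ‖u - w‖ ≤ ‖u‖ := norm_sub_smul_adjoint_apply_le hT (by positivity) (by linarith) u
  have hue : ‖u‖ ≤ √δ * ‖e‖ := norm_sub_adjoint_apply_le_sqrt hT hRIP
  calc ‖x' - xs‖ ≤ (1 + √(1 + (2 * η) ^ 2)) * ‖u‖ := norm_sub_le_of_lookahead hxs hw huw hopt
    _ ≤ (1 + √(1 + 4 * η ^ 2)) * (√δ * ‖e‖) := by
        rw [mul_pow, show (2 : ℝ) ^ 2 = 4 by norm_num]
        gcongr
    _ = √δ * (1 + √(1 + 4 * η ^ 2)) * ‖e‖ := by ring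

theorem stmt8_general {m d s : ℕ} (A : Matrix (Fin m) (Fin d) ℝ) (hA : opNorm A = 1)
    (η : ℝ) (hη0 : 0 ≤ η) (hη1 : η ≤ 1)
    (δ : ℝ)
    (hRIP : ∀ v : EuclideanSpace ℝ (Fin d), Sparse (2 * s) v →
      (1 - δ) * ‖v‖ ^ 2 ≤ ‖Mv A v‖ ^ 2 ∧ ‖Mv A v‖ ^ 2 ≤ (1 + δ) * ‖v‖ ^ 2)
    (hδ : δ < 1 / (1 + Real.sqrt (1 + 4 * η ^ 2)) ^ 2)
    (xs : EuclideanSpace ℝ (Fin d)) (hxs : Sparse s xs)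
    (y : EuclideanSpace ℝ (Fin m)) (hy : y = Mv A xs)
    (x a : ℕ → EuclideanSpace ℝ (Fin d)) (hx0 : x 0 = 0)
    (ha : ∀ t : ℕ, a (t + 1) = x t + Mv Aᵀ (y - Mv A (x t)))
    (hstep : ∀ t : ℕ, ∃ Ω : Finset (Fin d), Ω.card = s ∧ x (t + 1) = proj Ω (a (t + 1)) ∧
      ∀ Ω' : Finset (Fin d), Ω'.card = s →
        ‖x (t + 1) - (a (t + 1) - η • ((-2 : ℝ) • Mv Aᵀ (y - Mv A (a (t + 1)))))‖ ≤
        ‖proj Ω' (a (t + 1)) - (a (t + 1) - η • ((-2 : ℝ) • Mv Aᵀ (y - Mv A (a (t + 1)))))‖) :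
    Real.sqrt δ * (1 + Real.sqrt (1 + 4 * η ^ 2)) < 1 ∧
    (∀ t : ℕ, ‖x t - xs‖ ≤
      (Real.sqrt δ * (1 + Real.sqrt (1 + 4 * η ^ 2))) ^ t * ‖x 0 - xs‖) ∧
    Tendsto x atTop (nhds xs) := by
  set ρ := √δ * (1 + √(1 + 4 * η ^ 2))
  have hρ0 : 0 ≤ ρ := by positivity
  have hρ1 : ρ < 1 := by
    have hK : 0 < 1 + √(1 + 4 * η ^ 2) := by positivity
    exact (lt_div_iff₀ hK).1 ((Real.sqrt_lt' (one_div_pos.2 hK)).2 (by rwa [_root_.one_div_pow]))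
  obtain ⟨Ωs, hΩs, hxsΩs⟩ : ∃ Ω : Finset (Fin d), Ω.card = s ∧ ∀ i ∉ Ω, xs i = 0 := by
    obtain ⟨Ω, hΩ, -⟩ := hstep 0
    refine hxs.exists_card_eq_forall_notMem_eq_zero ?_
    simpa [hΩ] using Ω.card_le_univ
  have hsparse : ∀ t, Sparse s (x t)
    | 0 => by simp [hx0, Sparse]
    | t + 1 => by
      obtain ⟨Ω, hΩ, hxΩ, -⟩ := hstep t
      rw [hxΩ, ← hΩ]
      exact sparse_proj Ω _
  have hcontract : ∀ t, ‖x (t + 1) - xs‖ ≤ ρ * ‖x t - xs‖ := fun t => by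
    obtain ⟨-, -, -, hopt⟩ := hstep t
    have hat := ha t
    simp only [hy, Mv_transpose_apply] at hat hopt
    simp only [Mv_apply] at hat hopt
    have he : Sparse (2 * s) (x t - xs) := by
      rw [two_mul]
      exact (hsparse t).sub hxs
    exact ilat_step_error_le hA.le hη0 hη1 hxsΩs (hRIP _ he).1 hat (hopt Ωs hΩs)
  have hgeom : ∀ t, ‖x t - xs‖ ≤ ρ ^ t * ‖x 0 - xs‖ := fun t =>
    le_geom (u := fun t => ‖x t - xs‖) hρ0 t fun k _ => hcontract k
  refine ⟨hρ1, hgeom, tendsto_iff_norm_sub_tendsto_zero.2 ?_⟩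
  exact squeeze_zero (fun _ => norm_nonneg _) hgeom
    (by simpa using (tendsto_pow_atTop_nhds_zero_of_lt_one hρ0 hρ1).mul_const ‖x 0 - xs‖)

theorem stmt8 {m d s : ℕ} (A : Matrix (Fin m) (Fin d) ℝ) (hA : opNorm A = 1)
    (η : ℝ) (hη0 : 0 ≤ η) (hη1 : η ≤ 1)
    (δ : ℝ) (hδ0 : 0 ≤ δ)
    (hRIP : ∀ v : EuclideanSpace ℝ (Fin d), Sparse (2 * s) v →
      (1 - δ) * ‖v‖ ^ 2 ≤ ‖Mv A v‖ ^ 2 ∧ ‖Mv A v‖ ^ 2 ≤ (1 + δ) * ‖v‖ ^ 2)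
    (hδ : δ < 1 / (1 + Real.sqrt (1 + 4 * η ^ 2)) ^ 2)
    (xs : EuclideanSpace ℝ (Fin d)) (hxs : Sparse s xs)
    (y : EuclideanSpace ℝ (Fin m)) (hy : y = Mv A xs)
    (x a : ℕ → EuclideanSpace ℝ (Fin d)) (hx0 : x 0 = 0)
    (ha : ∀ t : ℕ, a (t + 1) = x t + Mv Aᵀ (y - Mv A (x t)))
    (hstep : ∀ t : ℕ, ∃ Ω : Finset (Fin d), Ω.card = s ∧ x (t + 1) = proj Ω (a (t + 1)) ∧
      ∀ Ω' : Finset (Fin d), Ω'.card = s →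
        ‖x (t + 1) - (a (t + 1) - η • ((-2 : ℝ) • Mv Aᵀ (y - Mv A (a (t + 1)))))‖ ≤
        ‖proj Ω' (a (t + 1)) - (a (t + 1) - η • ((-2 : ℝ) • Mv Aᵀ (y - Mv A (a (t + 1)))))‖) :
    Real.sqrt δ * (1 + Real.sqrt (1 + 4 * η ^ 2)) < 1 ∧
    (∀ t : ℕ, ‖x t - xs‖ ≤
      (Real.sqrt δ * (1 + Real.sqrt (1 + 4 * η ^ 2))) ^ t * ‖x 0 - xs‖) ∧
    Tendsto x atTop (nhds xs) :=
  stmt8_general A hA η hη0 hη1 δ hRIP hδ xs hxs y hy x a hx0 ha hstep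
end

section
/- Let A be an m×d random matrix with entries i.i.d. N(0, 1/m), and η > 0. Then E[‖I − 2ηA*A‖_F²] = 4d[((d+m+1)/m)η² − η + 1/4]. -/
open Matrix MeasureTheory ProbabilityTheory Filter
open scoped RealInnerProductSpace NNReal

/-!
Write `G = AᵀA`, so that `(I - 2ηG)ᵢⱼ = δᵢⱼ - 2η Gᵢⱼ` with `Gᵢⱼ = ∑ₖ Aₖᵢ Aₖⱼ` a sum of `m`
independent products. For centred Gaussian entries of variance `v`, `E[Aₖᵢ Aₖⱼ] = δᵢⱼ v` and
`Var(Aₖᵢ Aₖⱼ) = (1 + δᵢⱼ) v²`, the diagonal case being the fourth moment `E[X⁴] = 3v²`, read off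
as the fourth derivative at `0` of the moment generating function `exp (v t² / 2)`. Hence
`E[Gᵢⱼ²] = m (1 + δᵢⱼ) v² + δᵢⱼ m² v²`, and with `v = 1/m` summing
`E[(δᵢⱼ - 2η Gᵢⱼ)²]` over the `d²` entries gives the formula.
-/

open Real
open scoped ENNReal

lemma hasDerivAt_mul_exp_mul_sq (c : ℝ) {p : ℝ → ℝ} {p' t : ℝ} (hp : HasDerivAt p p' t) :
    HasDerivAt (fun t => p t * exp (c * t ^ 2)) ((p' + 2 * c * t * p t) * exp (c * t ^ 2)) t :=
  (hp.fun_mul ((hasDerivAt_pow 2 t).const_mul c).exp).congr_deriv (by push_cast; ring)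

lemma iteratedDeriv_four_exp_mul_sq_zero (c : ℝ) :
    iteratedDeriv 4 (fun t => exp (c * t ^ 2)) 0 = 12 * c ^ 2 := by
  have d1 : deriv (fun t => exp (c * t ^ 2)) = fun t => 2 * c * t * exp (c * t ^ 2) := by
    funext t
    simpa using (hasDerivAt_mul_exp_mul_sq c (hasDerivAt_const t (1 : ℝ))).deriv
  have d2 : deriv (fun t => 2 * c * t * exp (c * t ^ 2)) =
      fun t => (2 * c + 4 * c ^ 2 * t ^ 2) * exp (c * t ^ 2) := by
    funext t
    rw [(hasDerivAt_mul_exp_mul_sq c ((hasDerivAt_id' t).const_mul (2 * c))).deriv]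
    ring
  have d3 : deriv (fun t => (2 * c + 4 * c ^ 2 * t ^ 2) * exp (c * t ^ 2)) =
      fun t => (12 * c ^ 2 * t + 8 * c ^ 3 * t ^ 3) * exp (c * t ^ 2) := by
    funext t
    rw [(hasDerivAt_mul_exp_mul_sq c
      (((hasDerivAt_pow 2 t).const_mul (4 * c ^ 2)).const_add (2 * c))).deriv]
    push_cast
    ring
  have d4 : deriv (fun t => (12 * c ^ 2 * t + 8 * c ^ 3 * t ^ 3) * exp (c * t ^ 2)) 0 =
      12 * c ^ 2 := by
    rw [(hasDerivAt_mul_exp_mul_sq c (((hasDerivAt_id' 0).const_mul (12 * c ^ 2)).fun_add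
      ((hasDerivAt_pow 3 0).const_mul (8 * c ^ 3)))).deriv]
    simp
  simp only [iteratedDeriv_succ, iteratedDeriv_zero, d1, d2, d3, d4]

section GaussianMoments

variable {v : ℝ≥0}

lemma integral_sq_gaussianReal : ∫ x, x ^ 2 ∂gaussianReal 0 v = v := by
  have h := variance_eq_sub (memLp_id_gaussianReal (μ := 0) (v := v) 2)
  simp only [variance_id_gaussianReal, id, integral_id_gaussianReal] at h
  simpa using h.symm

lemma integral_pow_four_gaussianReal : ∫ x, x ^ 4 ∂gaussianReal 0 v = 3 * v ^ 2 := by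
  have h := iteratedDeriv_mgf_zero (X := fun x => x) (μ := gaussianReal 0 v) (by simp) 4
  simp only [mgf_fun_id_gaussianReal, zero_mul, zero_add, div_eq_inv_mul, ← mul_assoc,
    Pi.pow_apply] at h
  rw [← h, iteratedDeriv_four_exp_mul_sq_zero]
  ring

end GaussianMoments

section GaussianLaw

variable {Ω : Type*} [MeasurableSpace Ω] {μ : Measure Ω} {v : ℝ≥0} {X : Ω → ℝ}

lemma ProbabilityTheory.HasLaw.integral_eq_zero_of_gaussianReal
    (hX : HasLaw X (gaussianReal 0 v) μ) : ∫ ω, X ω ∂μ = 0 := by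
  rw [hX.integral_eq, integral_id_gaussianReal]

lemma ProbabilityTheory.HasLaw.integral_pow_of_gaussianReal
    (hX : HasLaw X (gaussianReal 0 v) μ) (n : ℕ) : ∫ ω, X ω ^ n ∂μ = ∫ x, x ^ n ∂gaussianReal 0 v :=
  hX.integral_comp (f := fun x => x ^ n) (by fun_prop)

lemma ProbabilityTheory.HasLaw.memLp_of_gaussianReal
    (hX : HasLaw X (gaussianReal 0 v) μ) {p : ℝ≥0∞} (hp : p ≠ ∞) : MemLp X p μ :=
  hX.hasGaussianLaw.memLp hp

end GaussianLaw

instance ENNReal.holderTriple_four_four_two : ENNReal.HolderTriple 4 4 2 :=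
  ⟨by rw [← two_mul, show (4 : ℝ≥0∞) = 2 * 2 by norm_num, ENNReal.mul_inv (by simp) (by simp),
    ← mul_assoc, ENNReal.mul_inv_cancel (by simp) (by simp), one_mul]⟩

section GaussianFamily

variable {Ω ι : Type*} [MeasurableSpace Ω] {μ : Measure Ω} {v : ℝ≥0} {Y : ι → Ω → ℝ}

lemma memLp_mul_of_gaussianReal (hY : ∀ p, HasLaw (Y p) (gaussianReal 0 v) μ) (p q : ι) :
    MemLp (fun ω => Y p ω * Y q ω) 2 μ :=
  ((hY q).memLp_of_gaussianReal (p := 4) (by simp)).mul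
    ((hY p).memLp_of_gaussianReal (p := 4) (by simp))

variable [DecidableEq ι]

lemma integral_mul_of_gaussianReal (hY : ∀ p, HasLaw (Y p) (gaussianReal 0 v) μ)
    (hind : iIndepFun Y μ) (p q : ι) :
    ∫ ω, Y p ω * Y q ω ∂μ = if p = q then (v : ℝ) else 0 := by
  split_ifs with hpq
  · subst hpq
    simp_rw [← sq, (hY p).integral_pow_of_gaussianReal, integral_sq_gaussianReal]
  · rw [(hind.indepFun hpq).integral_fun_mul_eq_mul_integral
      (hY p).aemeasurable.aestronglyMeasurable (hY q).aemeasurable.aestronglyMeasurable,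
      (hY p).integral_eq_zero_of_gaussianReal, zero_mul]

lemma integral_mul_sq_of_gaussianReal (hY : ∀ p, HasLaw (Y p) (gaussianReal 0 v) μ)
    (hind : iIndepFun Y μ) (p q : ι) :
    ∫ ω, (Y p ω * Y q ω) ^ 2 ∂μ = if p = q then 3 * (v : ℝ) ^ 2 else (v : ℝ) ^ 2 := by
  split_ifs with hpq
  · subst hpq
    simp_rw [← sq, ← pow_mul, (hY p).integral_pow_of_gaussianReal, integral_pow_four_gaussianReal]
  · have hsq : Measurable fun x : ℝ => x ^ 2 := by fun_prop
    have h := ((hind.indepFun hpq).comp hsq hsq).integral_fun_mul_eq_mul_integral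
      ((hY p).aemeasurable.pow_const 2).aestronglyMeasurable
      ((hY q).aemeasurable.pow_const 2).aestronglyMeasurable
    simp only [Function.comp_apply] at h
    simp_rw [mul_pow, h, (hY p).integral_pow_of_gaussianReal,
      (hY q).integral_pow_of_gaussianReal, integral_sq_gaussianReal, sq]

lemma variance_mul_of_gaussianReal [IsProbabilityMeasure μ]
    (hY : ∀ p, HasLaw (Y p) (gaussianReal 0 v) μ) (hind : iIndepFun Y μ) (p q : ι) :
    Var[fun ω => Y p ω * Y q ω; μ] = if p = q then 2 * (v : ℝ) ^ 2 else (v : ℝ) ^ 2 := by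
  simp only [variance_eq_sub (memLp_mul_of_gaussianReal hY p q), Pi.pow_apply,
    integral_mul_of_gaussianReal hY hind, integral_mul_sq_of_gaussianReal hY hind]
  split_ifs <;> ring

end GaussianFamily

lemma integral_sub_mul_sq {Ω : Type*} [MeasurableSpace Ω] {μ : Measure Ω}
    [IsProbabilityMeasure μ] {Z : Ω → ℝ} (hZ : MemLp Z 2 μ) (a c : ℝ) :
    ∫ ω, (a - c * Z ω) ^ 2 ∂μ = a ^ 2 - 2 * a * c * ∫ ω, Z ω ∂μ + c ^ 2 * ∫ ω, Z ω ^ 2 ∂μ := by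
  have hZ1 : Integrable Z μ := hZ.integrable one_le_two
  have hlin : Integrable (fun ω => a ^ 2 - 2 * a * c * Z ω) μ :=
    (integrable_const _).sub (hZ1.const_mul _)
  simp_rw [show ∀ ω, (a - c * Z ω) ^ 2 = a ^ 2 - 2 * a * c * Z ω + c ^ 2 * Z ω ^ 2 from
    fun ω => by ring]
  rw [integral_add hlin (hZ.integrable_sq.const_mul _),
    integral_sub (integrable_const _) (hZ1.const_mul _), integral_const, integral_const_mul,
    integral_const_mul]
  simp

section GramMatrix

variable {Ω m n : Type*} [MeasurableSpace Ω] {μ : Measure Ω} {v : ℝ≥0} {A : Ω → Matrix m n ℝ}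
  [Fintype m]

lemma memLp_gram_apply_of_gaussianReal
    (hA : ∀ p : m × n, HasLaw (fun ω => A ω p.1 p.2) (gaussianReal 0 v) μ) (i j : n) :
    MemLp (fun ω => ((A ω)ᵀ * A ω) i j) 2 μ := by
  simp only [mul_apply, transpose_apply]
  exact memLp_finsetSum _ fun k _ => memLp_mul_of_gaussianReal hA (k, i) (k, j)

variable [IsProbabilityMeasure μ] [DecidableEq m] [DecidableEq n]

lemma integral_gram_apply_of_gaussianReal
    (hA : ∀ p : m × n, HasLaw (fun ω => A ω p.1 p.2) (gaussianReal 0 v) μ)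
    (hind : iIndepFun (fun (p : m × n) ω => A ω p.1 p.2) μ) (i j : n) :
    ∫ ω, ((A ω)ᵀ * A ω) i j ∂μ = if i = j then Fintype.card m * (v : ℝ) else 0 := by
  have hZ : ∀ k, ∫ ω, A ω k i * A ω k j ∂μ = if i = j then (v : ℝ) else 0 := fun k => by
    simpa using integral_mul_of_gaussianReal hA hind (k, i) (k, j)
  simp only [mul_apply, transpose_apply]
  rw [integral_finsetSum _ fun k _ => (memLp_mul_of_gaussianReal hA (k, i) (k, j)).integrable
    one_le_two]
  simp_rw [hZ]
  split_ifs <;> simp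

lemma integral_gram_apply_sq_of_gaussianReal
    (hA : ∀ p : m × n, HasLaw (fun ω => A ω p.1 p.2) (gaussianReal 0 v) μ)
    (hind : iIndepFun (fun (p : m × n) ω => A ω p.1 p.2) μ) (i j : n) :
    ∫ ω, ((A ω)ᵀ * A ω) i j ^ 2 ∂μ =
      if i = j then Fintype.card m * (Fintype.card m + 2) * (v : ℝ) ^ 2
      else Fintype.card m * (v : ℝ) ^ 2 := by
  have hZ : ∀ k, MemLp (fun ω => A ω k i * A ω k j) 2 μ :=
    fun k => memLp_mul_of_gaussianReal hA (k, i) (k, j)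
  have hvar := IndepFun.variance_sum (s := Finset.univ) (fun k _ => hZ k)
    fun k _ l _ hkl => hind.indepFun_mul_mul₀ (fun p => (hA p).aemeasurable) (k, i) (k, j)
      (l, i) (l, j) (by simp [hkl]) (by simp [hkl]) (by simp [hkl]) (by simp [hkl])
  rw [variance_eq_sub (memLp_finsetSum' _ fun k _ => hZ k)] at hvar
  have hZvar : ∀ k, Var[fun ω => A ω k i * A ω k j; μ] =
      if i = j then 2 * (v : ℝ) ^ 2 else (v : ℝ) ^ 2 := fun k => by
    simpa using variance_mul_of_gaussianReal hA hind (k, i) (k, j)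
  have hmean := integral_gram_apply_of_gaussianReal hA hind i j
  simp only [mul_apply, transpose_apply] at hmean ⊢
  simp only [Finset.sum_apply, Pi.pow_apply, hmean, hZvar] at hvar
  split_ifs at hvar ⊢ <;> simp at hvar <;> linear_combination hvar

lemma integral_one_sub_smul_gram_apply_sq_of_gaussianReal
    (hA : ∀ p : m × n, HasLaw (fun ω => A ω p.1 p.2) (gaussianReal 0 v) μ)
    (hind : iIndepFun (fun (p : m × n) ω => A ω p.1 p.2) μ) (c : ℝ) (i j : n) :
    ∫ ω, (((1 : Matrix n n ℝ) - c • ((A ω)ᵀ * A ω)) i j) ^ 2 ∂μ =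
      c ^ 2 * Fintype.card m * v ^ 2 +
        if i = j then (1 - c * Fintype.card m * v) ^ 2 + c ^ 2 * Fintype.card m * v ^ 2
        else 0 := by
  simp only [Matrix.sub_apply, Matrix.smul_apply, smul_eq_mul, one_apply]
  rw [integral_sub_mul_sq (memLp_gram_apply_of_gaussianReal hA i j),
    integral_gram_apply_of_gaussianReal hA hind, integral_gram_apply_sq_of_gaussianReal hA hind]
  split_ifs <;> simp <;> ring

end GramMatrix

theorem stmt15_general {m d : ℕ} (hm : 0 < m) {Ω : Type*} [MeasurableSpace Ω] (μ : Measure Ω)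
    [IsProbabilityMeasure μ] (A : Ω → Matrix (Fin m) (Fin d) ℝ)
    (hdist : ∀ (i : Fin m) (j : Fin d),
      Measure.map (fun ω => A ω i j) μ = gaussianReal 0 ((m : ℝ≥0))⁻¹)
    (hindep : iIndepFun
      (fun (p : Fin m × Fin d) ω => A ω p.1 p.2) μ)
    (η : ℝ) :
    (∫ ω, ∑ i, ∑ j,
        (((1 : Matrix (Fin d) (Fin d) ℝ) - (2 * η) • ((A ω)ᵀ * A ω)) i j) ^ 2 ∂μ) =
      4 * d * ((d + m + 1 : ℝ) / m * η ^ 2 - η + 1 / 4) := by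
  have hA : ∀ p : Fin m × Fin d,
      HasLaw (fun ω => A ω p.1 p.2) (gaussianReal 0 (m : ℝ≥0)⁻¹) μ :=
    fun p => ⟨aemeasurable_of_map_neZero (by rw [hdist]; infer_instance), hdist p.1 p.2⟩
  have hint : ∀ i j, Integrable
      (fun ω => (((1 : Matrix (Fin d) (Fin d) ℝ) - (2 * η) • ((A ω)ᵀ * A ω)) i j) ^ 2) μ :=
    fun i j => by
      simpa [Matrix.sub_apply, Matrix.smul_apply] using ((memLp_const _).sub
        ((memLp_gram_apply_of_gaussianReal hA i j).const_mul (2 * η))).integrable_sq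
  rw [integral_finsetSum _ fun i _ => integrable_finsetSum _ fun j _ => hint i j]
  simp_rw [integral_finsetSum _ fun j _ => hint _ j,
    integral_one_sub_smul_gram_apply_sq_of_gaussianReal hA hindep]
  have hm' : (m : ℝ) ≠ 0 := by positivity
  simp only [Fintype.card_fin, NNReal.coe_inv, NNReal.coe_natCast, Finset.sum_add_distrib,
    Finset.sum_const, Finset.card_univ, nsmul_eq_mul, Finset.sum_ite_eq, Finset.mem_univ,
    if_true]
  field_simp
  ring

theorem stmt15 {m d : ℕ} (hm : 0 < m) {Ω : Type*} [MeasurableSpace Ω] (μ : Measure Ω)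
    [IsProbabilityMeasure μ] (A : Ω → Matrix (Fin m) (Fin d) ℝ)
    (hdist : ∀ (i : Fin m) (j : Fin d),
      Measure.map (fun ω => A ω i j) μ = gaussianReal 0 ((m : ℝ≥0))⁻¹)
    (hindep : iIndepFun
      (fun (p : Fin m × Fin d) ω => A ω p.1 p.2) μ)
    (η : ℝ) (hη : 0 < η) :
    (∫ ω, ∑ i, ∑ j,
        (((1 : Matrix (Fin d) (Fin d) ℝ) - (2 * η) • ((A ω)ᵀ * A ω)) i j) ^ 2 ∂μ) =
      4 * d * ((d + m + 1 : ℝ) / m * η ^ 2 - η + 1 / 4) :=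
  stmt15_general hm μ A hdist hindep η
end
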